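/- arXiv:math/0308061 — 4 statements merged into one kernel-verified Lean document; each statement's English description precedes it below -/
import Mathlib

section
/- For every integer n ≥ 0 and every integer j with 0 ≤ j ≤ n/3, the number of partitions of n whose parts of even index sum to j equals Σ_{i=0}^{j} p(i)·p(j−i), where p denotes the ordinary partition function. -/
/-!
In the Young diagram of `λ`, the rows of even index (of lengths `a₂, a₄, …`) become, after
transposition, the columns `2, 4, …` of the conjugate partition `π`; a row of `π` of length `m`
meets `⌊m / 2⌋` of these columns, so `|λ_e| = Σ ⌊π_i / 2⌋`. Conjugation being a bijection, `f(n, j)`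
counts the partitions `π` of `n` with `Σ ⌊π_i / 2⌋ = j`. Writing each part of `π` as `2v` (put `v`
into `μ`), as `2v + 1 ≥ 3` (put `v` into `ν`) or as `1`, these correspond to the pairs `(μ, ν)` with
`|μ| + |ν| = j`: the number of `1`s is forced to be `n - 2j - #ν`, which is nonnegative since
`#ν ≤ j` and `3j ≤ n`.
-/

/-- `p(n)`: the number of partitions of `n`. -/
noncomputable def partitionCount (n : ℕ) : ℕ := Fintype.card (Nat.Partition n)

/-- The parts of a partition, listed in weakly decreasing order
(so that the `j`-th entry, `1`-based, is `a_j`). -/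
def sortedParts {n : ℕ} (lam : Nat.Partition n) : List ℕ :=
  lam.parts.sort (· ≥ ·)

/-- The sum of the parts of even index `a_2 + a_4 + a_6 + ⋯` of a partition. -/
def evenIndexSum {n : ℕ} (lam : Nat.Partition n) : ℕ :=
  ∑ j ∈ Finset.range (sortedParts lam).length,
    if (j + 1) % 2 = 0 then (sortedParts lam).getD j 0 else 0

/-- `f(n,j)`: the number of partitions of `n` whose parts of even index sum to `j`. -/
noncomputable def f (n j : ℕ) : ℕ :=
  (Finset.univ.filter (fun lam : Nat.Partition n => evenIndexSum lam = j)).card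


open Finset

lemma card_filter_odd_range (m : ℕ) : #{k ∈ range m | Odd k} = m / 2 := by
  rw [← Nat.card_multiples]
  congr 1
  exact filter_congr fun k _ => by rw [Nat.odd_iff, Nat.dvd_iff_mod_eq_zero]; omega

namespace YoungDiagram

lemma card_filter_eq_sum_row (μ : YoungDiagram) (p : ℕ × ℕ → Prop) [DecidablePred p] :
    #{c ∈ μ.cells | p c} = ∑ i ∈ range (μ.colLen 0), #{c ∈ μ.row i | p c} := by
  rw [card_eq_sum_card_fiberwise (f := Prod.fst) (t := range (μ.colLen 0))]
  · refine sum_congr rfl fun i _ => ?_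
    simp only [row, filter_filter, and_comm]
  · intro c hc
    rw [mem_coe, mem_filter, mem_cells] at hc
    rw [mem_coe, mem_range, ← mem_iff_lt_colLen]
    exact μ.up_left_mem le_rfl (Nat.zero_le _) hc.1

lemma card_filter_odd_snd (μ : YoungDiagram) :
    #{c ∈ μ.cells | Odd c.2} = ∑ i ∈ range (μ.colLen 0), μ.rowLen i / 2 := by
  rw [card_filter_eq_sum_row]
  refine sum_congr rfl fun i _ => ?_
  rw [row_eq_prod, filter_product_right, card_product, card_singleton, one_mul,
    card_filter_odd_range]

lemma sum_map_rowLens (μ : YoungDiagram) (g : ℕ → ℕ) :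
    (μ.rowLens.map g).sum = ∑ i ∈ range (μ.colLen 0), g (μ.rowLen i) := by
  rw [rowLens, List.map_map]; rfl

lemma sum_rowLens (μ : YoungDiagram) : μ.rowLens.sum = μ.card := by
  calc μ.rowLens.sum = ∑ i ∈ range (μ.colLen 0), μ.rowLen i := by
        simpa using μ.sum_map_rowLens id
    _ = μ.card := by
        simpa [rowLen_eq_card] using (μ.card_filter_eq_sum_row fun _ => True).symm

lemma card_filter_odd_fst (μ : YoungDiagram) :
    #{c ∈ μ.cells | Odd c.1} = ∑ i ∈ range (μ.colLen 0), if Odd i then μ.rowLen i else 0 := by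
  rw [card_filter_eq_sum_row]
  refine sum_congr rfl fun i _ => ?_
  split_ifs with hi
  · rw [rowLen_eq_card]
    congr 1
    exact filter_true_of_mem fun c hc => (mem_row_iff.1 hc).2 ▸ hi
  · exact card_eq_zero.2 (filter_false_of_mem fun c hc => (mem_row_iff.1 hc).2 ▸ hi)

lemma card_filter_transpose (μ : YoungDiagram) (p : ℕ × ℕ → Prop) [DecidablePred p] :
    #{c ∈ μ.transpose.cells | p c} = #{c ∈ μ.cells | p c.swap} := by
  refine card_nbij' Prod.swap Prod.swap ?_ ?_ ?_ ?_ <;> simp [Set.MapsTo, Set.LeftInvOn]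

lemma card_transpose (μ : YoungDiagram) : μ.transpose.card = μ.card := by
  simpa using μ.card_filter_transpose fun _ => True

end YoungDiagram

namespace Nat.Partition

variable {n : ℕ}

lemma sortedGE_sortedParts (lam : n.Partition) : (sortedParts lam).SortedGE :=
  (Multiset.pairwise_sort _ _).sortedGE

def toYoungDiagram (lam : n.Partition) : YoungDiagram :=
  .ofRowLens (sortedParts lam) lam.sortedGE_sortedParts

lemma rowLens_toYoungDiagram (lam : n.Partition) : lam.toYoungDiagram.rowLens = sortedParts lam :=
  YoungDiagram.rowLens_ofRowLens_eq_self fun _ hx => lam.parts_pos ((Multiset.mem_sort _).1 hx)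

lemma card_toYoungDiagram (lam : n.Partition) : lam.toYoungDiagram.card = n := by
  rw [← YoungDiagram.sum_rowLens, rowLens_toYoungDiagram, ← Multiset.sum_coe, sortedParts,
    Multiset.sort_eq, lam.parts_sum]

def ofYoungDiagram (μ : YoungDiagram) (h : μ.card = n) : n.Partition where
  parts := μ.rowLens
  parts_pos hx := μ.pos_of_mem_rowLens _ hx
  parts_sum := by rw [Multiset.sum_coe, ← h, YoungDiagram.sum_rowLens]

def equivYoungDiagram (n : ℕ) : n.Partition ≃ {μ : YoungDiagram // μ.card = n} where
  toFun lam := ⟨lam.toYoungDiagram, lam.card_toYoungDiagram⟩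
  invFun μ := ofYoungDiagram μ.1 μ.2
  left_inv lam := by
    ext : 1
    simp only [ofYoungDiagram, rowLens_toYoungDiagram, sortedParts, Multiset.sort_eq]
  right_inv μ := by
    ext : 1
    apply YoungDiagram.equivListRowLens.injective
    ext : 1
    simp only [YoungDiagram.equivListRowLens_apply_coe, rowLens_toYoungDiagram, sortedParts,
      ofYoungDiagram, Multiset.coe_sort]
    exact List.mergeSort_eq_self _ μ.1.rowLens_sorted.pairwise

def conjugate : n.Partition ≃ n.Partition :=
  (equivYoungDiagram n).trans <|
    (YoungDiagram.transposeOrderIso.toEquiv.subtypeEquiv fun μ => by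
      simp [YoungDiagram.transposeOrderIso, YoungDiagram.card_transpose]).trans
    (equivYoungDiagram n).symm

/-- Rows are numbered from `0`, so the parts of even index `a₂, a₄, …` are the rows with odd
number. -/
lemma evenIndexSum_eq_card_filter_odd_fst (lam : n.Partition) :
    evenIndexSum lam = #{c ∈ lam.toYoungDiagram.cells | Odd c.1} := by
  rw [YoungDiagram.card_filter_odd_fst, evenIndexSum, ← rowLens_toYoungDiagram,
    YoungDiagram.length_rowLens]
  refine sum_congr rfl fun i hi => ?_
  rw [mem_range, ← YoungDiagram.length_rowLens] at hi
  rw [List.getD_eq_getElem _ _ hi, YoungDiagram.get_rowLens]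
  simp only [Nat.odd_iff, show (i + 1) % 2 = 0 ↔ i % 2 = 1 by omega]

lemma evenIndexSum_eq_sum_div_two_conjugate (lam : n.Partition) :
    evenIndexSum lam = ((conjugate lam).parts.map (· / 2)).sum := by
  have hparts : (conjugate lam).parts = lam.toYoungDiagram.transpose.rowLens := rfl
  rw [evenIndexSum_eq_card_filter_odd_fst, hparts, Multiset.map_coe, Multiset.sum_coe,
    YoungDiagram.sum_map_rowLens, ← YoungDiagram.card_filter_odd_snd,
    YoungDiagram.card_filter_transpose]
  rfl

end Nat.Partition

namespace Multiset

def evenHalves (s : Multiset ℕ) : Multiset ℕ := (s.filter Even).map (· / 2)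

def oddHalves (s : Multiset ℕ) : Multiset ℕ := (s.filter fun x => Odd x ∧ 1 < x).map (· / 2)

def ofHalves (μ ν : Multiset ℕ) (r : ℕ) : Multiset ℕ :=
  μ.map (2 * ·) + ν.map (2 * · + 1) + replicate r 1

variable {s μ ν : Multiset ℕ}

lemma pos_of_mem_evenHalves (hs : 0 ∉ s) {v : ℕ} (hv : v ∈ evenHalves s) : 0 < v := by
  obtain ⟨x, hx, rfl⟩ := mem_map.1 hv
  obtain ⟨hxs, k, rfl⟩ := mem_filter.1 hx
  have : k ≠ 0 := by rintro rfl; exact hs hxs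
  omega

lemma pos_of_mem_oddHalves {v : ℕ} (hv : v ∈ oddHalves s) : 0 < v := by
  obtain ⟨x, hx, rfl⟩ := mem_map.1 hv
  have := (mem_filter.1 hx).2.2
  omega

lemma ofHalves_evenHalves_oddHalves (hs : 0 ∉ s) :
    ofHalves (evenHalves s) (oddHalves s) (s.count 1) = s := by
  have heven : (evenHalves s).map (2 * ·) = s.filter Even := by
    rw [evenHalves, map_map]
    exact (map_congr rfl fun x hx => Nat.two_mul_div_two_of_even (mem_filter.1 hx).2).trans
      (map_id _)
  have hodd : (oddHalves s).map (2 * · + 1) = s.filter fun x => Odd x ∧ 1 < x := by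
    rw [oddHalves, map_map]
    exact (map_congr rfl fun x hx => Nat.two_mul_div_two_add_one_of_odd (mem_filter.1 hx).2.1).trans
      (map_id _)
  have hnot_even : s.filter (fun x => Odd x ∧ 1 < x) + s.filter (· = 1) = s.filter (¬Even ·) := by
    rw [← filter_add_not (1 < ·) (s.filter (¬Even ·)), filter_filter, filter_filter]
    congr 1
    · exact filter_congr fun x _ => by rw [Nat.not_even_iff_odd, and_comm]
    · exact filter_congr fun x hx => by
        have : x ≠ 0 := fun h => hs (h ▸ hx)
        rw [Nat.not_even_iff_odd, Nat.odd_iff]; omega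
  rw [ofHalves, heven, hodd, ← filter_eq', add_assoc, hnot_even, filter_add_not]

lemma evenHalves_ofHalves (r : ℕ) : evenHalves (ofHalves μ ν r) = μ := by
  simp [evenHalves, ofHalves, filter_map, map_map, mem_replicate]

lemma oddHalves_ofHalves (hν : 0 ∉ ν) (r : ℕ) : oddHalves (ofHalves μ ν r) = ν := by
  have hμ : μ.filter (fun x => Odd (2 * x) ∧ 1 < 2 * x) = 0 :=
    filter_eq_nil.2 fun x _ hx => Nat.not_odd_iff_even.2 (even_two_mul x) hx.1
  have hν' : ν.filter (0 < ·) = ν :=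
    filter_eq_self.2 fun x hx => Nat.pos_of_ne_zero (ne_of_mem_of_not_mem hx hν)
  have hr : (replicate r 1).filter (fun x => Odd x ∧ 1 < x) = 0 :=
    filter_eq_nil.2 fun x hx h => by rw [eq_of_mem_replicate hx] at h; exact lt_irrefl _ h.2
  simp [oddHalves, ofHalves, filter_map, map_map, Nat.mul_add_div, hμ, hν', hr]

lemma sum_ofHalves (r : ℕ) : (ofHalves μ ν r).sum = 2 * μ.sum + 2 * ν.sum + card ν + r := by
  rw [ofHalves, sum_add, sum_add, sum_map_add, sum_map_mul_left, sum_map_mul_left, map_id',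
    map_id', map_const', sum_replicate, sum_replicate, smul_eq_mul, smul_eq_mul, mul_one, mul_one]
  ring

lemma sum_map_div_two_ofHalves (r : ℕ) : ((ofHalves μ ν r).map (· / 2)).sum = μ.sum + ν.sum := by
  simp [ofHalves, map_map, Nat.mul_add_div]

lemma sum_map_div_two_eq_sum_evenHalves_add_sum_oddHalves (hs : 0 ∉ s) :
    (s.map (· / 2)).sum = (evenHalves s).sum + (oddHalves s).sum := by
  conv_lhs => rw [← ofHalves_evenHalves_oddHalves hs]
  exact sum_map_div_two_ofHalves _

end Multiset

namespace Nat.Partition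

lemma zero_notMem_parts {n : ℕ} (π : n.Partition) : 0 ∉ π.parts :=
  fun h => lt_irrefl 0 (π.parts_pos h)

lemma card_parts_le {n : ℕ} (π : n.Partition) : Multiset.card π.parts ≤ n := by
  simpa [π.parts_sum] using Multiset.card_nsmul_le_sum (a := 1) fun _ hx => π.parts_pos hx

lemma sigma_ext {j : ℕ} {x y : Σ i, i.Partition × (j - i).Partition}
    (h₁ : x.2.1.parts = y.2.1.parts) (h₂ : x.2.2.parts = y.2.2.parts) : x = y := by
  obtain ⟨i, μ, ν⟩ := x
  obtain ⟨i', μ', ν'⟩ := y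
  obtain rfl : i = i' := by rw [← μ.parts_sum, ← μ'.parts_sum]; exact congrArg _ h₁
  cases Nat.Partition.ext h₁
  cases Nat.Partition.ext h₂
  rfl

open Multiset (card evenHalves oddHalves sum_map_div_two_eq_sum_evenHalves_add_sum_oddHalves)

variable {n j : ℕ}

def toHalves (π : n.Partition) (h : (π.parts.map (· / 2)).sum = j) :
    Σ i, i.Partition × (j - i).Partition :=
  ⟨(evenHalves π.parts).sum,
    ⟨evenHalves π.parts, Multiset.pos_of_mem_evenHalves π.zero_notMem_parts, rfl⟩,
    ⟨oddHalves π.parts, Multiset.pos_of_mem_oddHalves, by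
      rw [← h, sum_map_div_two_eq_sum_evenHalves_add_sum_oddHalves π.zero_notMem_parts]
      omega⟩⟩

lemma toHalves_fst_le (π : n.Partition) (h : (π.parts.map (· / 2)).sum = j) :
    (toHalves π h).1 ≤ j := by
  have := sum_map_div_two_eq_sum_evenHalves_add_sum_oddHalves π.zero_notMem_parts
  show (evenHalves π.parts).sum ≤ j
  omega

def ofHalves (hj : 3 * j ≤ n) (x : Σ i, i.Partition × (j - i).Partition) (hx : x.1 ≤ j) :
    n.Partition where
  parts := Multiset.ofHalves x.2.1.parts x.2.2.parts (n - 2 * j - card x.2.2.parts)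
  parts_pos {v} hv := by
    simp only [Multiset.ofHalves, Multiset.mem_add, Multiset.mem_map,
      Multiset.mem_replicate] at hv
    rcases hv with (⟨u, hu, rfl⟩ | ⟨u, -, rfl⟩) | ⟨-, rfl⟩
    · exact Nat.mul_pos two_pos (x.2.1.parts_pos hu)
    · exact Nat.succ_pos _
    · exact one_pos
  parts_sum := by
    have := x.2.2.card_parts_le
    rw [Multiset.sum_ofHalves, x.2.1.parts_sum, x.2.2.parts_sum]
    omega

lemma sum_map_div_two_parts_ofHalves (hj : 3 * j ≤ n) (x : Σ i, i.Partition × (j - i).Partition)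
    (hx : x.1 ≤ j) : ((ofHalves hj x hx).parts.map (· / 2)).sum = j := by
  rw [ofHalves, Multiset.sum_map_div_two_ofHalves, x.2.1.parts_sum, x.2.2.parts_sum]
  omega

lemma ofHalves_toHalves (hj : 3 * j ≤ n) (π : n.Partition) (h : (π.parts.map (· / 2)).sum = j)
    (hx : (toHalves π h).1 ≤ j) : ofHalves hj (toHalves π h) hx = π := by
  ext : 1
  have hreassemble := Multiset.ofHalves_evenHalves_oddHalves π.zero_notMem_parts
  have hsum := congrArg Multiset.sum hreassemble
  rw [Multiset.sum_ofHalves, π.parts_sum] at hsum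
  rw [sum_map_div_two_eq_sum_evenHalves_add_sum_oddHalves π.zero_notMem_parts] at h
  conv_rhs => rw [← hreassemble]
  show Multiset.ofHalves _ _ (n - 2 * j - card (oddHalves π.parts)) = _
  congr 1
  omega

theorem card_filter_sum_map_div_two (hj : 3 * j ≤ n) :
    #{π : n.Partition | (π.parts.map (· / 2)).sum = j} =
      ∑ i ∈ range (j + 1), partitionCount i * partitionCount (j - i) := by
  have hpairs : ∑ i ∈ range (j + 1), partitionCount i * partitionCount (j - i) =
      #((range (j + 1)).sigma fun i => (univ : Finset (i.Partition × (j - i).Partition))) := by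
    simp [partitionCount]
  rw [hpairs]
  refine card_bij' (fun π hπ => toHalves π (mem_filter.1 hπ).2)
    (fun x hx => ofHalves hj x (Nat.lt_succ_iff.1 (mem_range.1 (mem_sigma.1 hx).1)))
    (fun π hπ => ?_) (fun x hx => ?_) (fun π _ => ofHalves_toHalves hj π _ _) (fun x _ => ?_)
  · simpa using Nat.lt_succ_of_le (toHalves_fst_le π _)
  · simpa using sum_map_div_two_parts_ofHalves hj x _
  · exact sigma_ext (Multiset.evenHalves_ofHalves _)
      (Multiset.oddHalves_ofHalves x.2.2.zero_notMem_parts _)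

end Nat.Partition

theorem stmt_0 (n j : ℕ) (hj : 3 * j ≤ n) :
    f n j = ∑ i ∈ Finset.range (j + 1), partitionCount i * partitionCount (j - i) := by
  rw [← Nat.Partition.card_filter_sum_map_div_two hj, f]
  exact card_equiv Nat.Partition.conjugate fun lam => by
    simp [Nat.Partition.evenIndexSum_eq_sum_div_two_conjugate]
end

section
/- For integers m ≥ 2 and 1 ≤ ℓ ≤ m − 1, with ω = e^{2πi/m}, the Dirichlet series Σ_{j=1}^{∞} ω^{ℓj} j^{−s}, initially defined for Re(s) > 1, extends to an analytic function on the half-plane Re(s) > 0 whose value at s = 1 is log(1/(1 − ω^ℓ)) (principal branch). -/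
/-!
Write `z = ω ^ ℓ`, so that `‖z‖ = 1` and `z ≠ 1`. The partial sums `P N = ∑_{j<N} z ^ (j + 1)`
are geometric, hence bounded, and summation by parts rewrites the series as
`∑ P (n + 1) ((n + 1) ^ (-s) - (n + 2) ^ (-s))`. By the mean value theorem its terms are
`O(‖s‖ n ^ (-Re s - 1))`, so it converges locally uniformly on `Re s > 0` to a holomorphic
function. At `s = 1` this says that `∑ z ^ n / n` converges, and Abel's limit theorem identifies
its sum with `lim_{x → 1⁻} -log (1 - z x) = -log (1 - z)`.
-/

open Complex Finset Filter Topology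

section BoundedPartialSums

variable {c : ℕ → ℂ} {C : ℝ} {s : ℂ}

lemma summable_natCast_add_one_rpow_neg {p : ℝ} (hp : 1 < p) :
    Summable (fun n : ℕ => ((n : ℝ) + 1) ^ (-p)) :=
  ((summable_nat_add_iff 1).mpr (Real.summable_nat_rpow.mpr (neg_lt_neg hp))).congr
    fun n => by push_cast; rfl

lemma norm_natCast_cpow_neg_sub_le (n : ℕ) (hs : -1 ≤ s.re) :
    ‖((n + 1 : ℕ) : ℂ) ^ (-s) - ((n + 2 : ℕ) : ℂ) ^ (-s)‖ ≤
      ‖s‖ * ((n : ℝ) + 1) ^ (-(s.re + 1)) := by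
  rcases eq_or_ne s 0 with rfl | hs0
  · simp
  have hpos : ∀ t ∈ Set.Icc ((n : ℝ) + 1) (n + 2), 0 < t := fun t ht => by
    linarith [ht.1, (n.cast_nonneg : (0 : ℝ) ≤ n)]
  have hderiv : ∀ t ∈ Set.Icc ((n : ℝ) + 1) (n + 2),
      HasDerivWithinAt (fun t : ℝ => (t : ℂ) ^ (-s)) (-s * (t : ℂ) ^ (-s - 1))
        (Set.Icc ((n : ℝ) + 1) (n + 2)) t := fun t ht =>
    (hasDerivAt_ofReal_cpow_const (hpos t ht).ne' (neg_ne_zero.mpr hs0)).hasDerivWithinAt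
  have hbound : ∀ t ∈ Set.Icc ((n : ℝ) + 1) (n + 2),
      ‖-s * (t : ℂ) ^ (-s - 1)‖ ≤ ‖s‖ * ((n : ℝ) + 1) ^ (-(s.re + 1)) := by
    intro t ht
    rw [norm_mul, norm_neg, norm_cpow_eq_rpow_re_of_pos (hpos t ht)]
    refine mul_le_mul_of_nonneg_left ?_ (norm_nonneg s)
    rw [show (-s - 1).re = -(s.re + 1) by simp; ring]
    exact Real.rpow_le_rpow_of_nonpos (by positivity) ht.1 (by linarith)
  have hmvt := (convex_Icc _ _).norm_image_sub_le_of_norm_hasDerivWithin_le hderiv hbound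
    (Set.left_mem_Icc.mpr (by linarith)) (Set.right_mem_Icc.mpr (by linarith))
  rw [show (n : ℝ) + 2 - (n + 1) = 1 by ring, norm_one, mul_one] at hmvt
  rw [norm_sub_rev]
  push_cast at hmvt ⊢
  exact hmvt

noncomputable def dirichletByPartsTerm (c : ℕ → ℂ) (s : ℂ) (n : ℕ) : ℂ :=
  (∑ j ∈ range (n + 1), c j) * (((n + 1 : ℕ) : ℂ) ^ (-s) - ((n + 2 : ℕ) : ℂ) ^ (-s))

noncomputable def dirichletSeriesByParts (c : ℕ → ℂ) (s : ℂ) : ℂ :=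
  ∑' n, dirichletByPartsTerm c s n

lemma differentiable_dirichletByPartsTerm (n : ℕ) :
    Differentiable ℂ (fun s => dirichletByPartsTerm c s n) := by
  have hcpow (k : ℕ) : Differentiable ℂ (fun s : ℂ => ((k + 1 : ℕ) : ℂ) ^ (-s)) :=
    differentiable_neg.const_cpow (.inl (Nat.cast_ne_zero.mpr k.succ_ne_zero))
  exact (differentiable_const _).mul ((hcpow n).sub (hcpow (n + 1)))

lemma sum_range_succ_mul_cpow_neg_eq (N : ℕ) :
    ∑ j ∈ range (N + 1), c j * ((j + 1 : ℕ) : ℂ) ^ (-s) =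
      ∑ n ∈ range N, dirichletByPartsTerm c s n +
        (∑ j ∈ range (N + 1), c j) * ((N + 1 : ℕ) : ℂ) ^ (-s) := by
  have := sum_range_by_parts (fun j => ((j + 1 : ℕ) : ℂ) ^ (-s)) c (N + 1)
  simp only [smul_eq_mul, add_tsub_cancel_right] at this
  simp_rw [mul_comm (c _), this, dirichletByPartsTerm, sub_eq_add_neg _ (∑ _ ∈ _, _),
    ← sum_neg_distrib]
  rw [add_comm, mul_comm]
  congr 1
  refine sum_congr rfl fun n _ => ?_
  push_cast
  ring_nf

lemma norm_dirichletByPartsTerm_le (hc : ∀ N, ‖∑ j ∈ range N, c j‖ ≤ C)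
    (hs : -1 ≤ s.re) (n : ℕ) :
    ‖dirichletByPartsTerm c s n‖ ≤ C * ‖s‖ * ((n : ℝ) + 1) ^ (-(s.re + 1)) := by
  rw [dirichletByPartsTerm, norm_mul, mul_assoc]
  exact mul_le_mul (hc _) (norm_natCast_cpow_neg_sub_le n hs) (norm_nonneg _)
    ((norm_nonneg _).trans (hc 0))

lemma summable_dirichletByPartsTerm (hc : ∀ N, ‖∑ j ∈ range N, c j‖ ≤ C)
    (hs : 0 < s.re) : Summable (dirichletByPartsTerm c s) :=
  .of_norm_bounded ((summable_natCast_add_one_rpow_neg (by linarith)).mul_left (C * ‖s‖))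
    (norm_dirichletByPartsTerm_le hc (by linarith))

lemma tendstoUniformlyOn_dirichletSeriesByParts (hc : ∀ N, ‖∑ j ∈ range N, c j‖ ≤ C)
    {σ R : ℝ} (hσ : 0 < σ) :
    TendstoUniformlyOn (fun N s => ∑ n ∈ range N, dirichletByPartsTerm c s n)
      (dirichletSeriesByParts c) atTop {s | σ ≤ s.re ∧ ‖s‖ ≤ R} := by
  refine tendstoUniformlyOn_tsum_nat
    ((summable_natCast_add_one_rpow_neg (by linarith : 1 < σ + 1)).mul_left (C * R))
    fun n s ⟨hσs, hR⟩ => (norm_dirichletByPartsTerm_le hc (by linarith) n).trans ?_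
  have hC : 0 ≤ C := (norm_nonneg _).trans (hc 0)
  have hn : (1 : ℝ) ≤ n + 1 := by linarith [(n.cast_nonneg : (0 : ℝ) ≤ n)]
  exact mul_le_mul (mul_le_mul_of_nonneg_left hR hC)
    (Real.rpow_le_rpow_of_exponent_le hn (by linarith)) (by positivity)
    (mul_nonneg hC ((norm_nonneg s).trans hR))

lemma tendstoLocallyUniformlyOn_dirichletSeriesByParts 
    (hc : ∀ N, ‖∑ j ∈ range N, c j‖ ≤ C) :
    TendstoLocallyUniformlyOn (fun N s => ∑ n ∈ range N, dirichletByPartsTerm c s n)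
      (dirichletSeriesByParts c) atTop {s | 0 < s.re} := by
  refine tendstoLocallyUniformlyOn_of_forall_exists_nhds fun s₀ (hs₀ : 0 < s₀.re) =>
    ⟨_, ?_, tendstoUniformlyOn_dirichletSeriesByParts hc (R := ‖s₀‖ + 1) (half_pos hs₀)⟩
  have hnear : ∀ᶠ s in 𝓝 s₀, s₀.re / 2 < s.re ∧ ‖s‖ < ‖s₀‖ + 1 :=
    ((continuous_re.tendsto s₀).eventually (lt_mem_nhds (by linarith))).and
      ((continuous_norm.tendsto s₀).eventually (gt_mem_nhds (by linarith)))
  exact mem_nhdsWithin_of_mem_nhds (hnear.mono fun s hs => ⟨hs.1.le, hs.2.le⟩)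

lemma differentiableOn_dirichletSeriesByParts 
    (hc : ∀ N, ‖∑ j ∈ range N, c j‖ ≤ C) :
    DifferentiableOn ℂ (dirichletSeriesByParts c) {s | 0 < s.re} := by
  refine (tendstoLocallyUniformlyOn_dirichletSeriesByParts hc).differentiableOn
    (.of_forall fun N => Differentiable.differentiableOn ?_)
    (isOpen_lt continuous_const continuous_re)
  exact .fun_sum fun n _ => differentiable_dirichletByPartsTerm n

lemma tendsto_sum_range_mul_cpow_neg (hc : ∀ N, ‖∑ j ∈ range N, c j‖ ≤ C)
    (hs : 0 < s.re) :
    Tendsto (fun N => ∑ j ∈ range N, c j * ((j + 1 : ℕ) : ℂ) ^ (-s)) atTop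
      (𝓝 (dirichletSeriesByParts c s)) := by
  have hboundary : Tendsto (fun N => (∑ j ∈ range (N + 1), c j) * ((N + 1 : ℕ) : ℂ) ^ (-s))
      atTop (𝓝 0) := by
    refine squeeze_zero_norm (a := fun N : ℕ => C * ((N : ℝ) + 1) ^ (-s.re)) (fun N => ?_) ?_
    · rw [norm_mul, norm_natCast_cpow_of_pos N.succ_pos, neg_re]
      push_cast
      exact mul_le_mul_of_nonneg_right (hc _) (by positivity)
    · simpa using ((tendsto_rpow_neg_atTop hs).comp
        (tendsto_atTop_add_const_right atTop 1 tendsto_natCast_atTop_atTop)).const_mul C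
  rw [← tendsto_add_atTop_iff_nat 1, dirichletSeriesByParts, ← add_zero (tsum _)]
  exact ((summable_dirichletByPartsTerm hc hs).hasSum.tendsto_sum_nat.add hboundary).congr
    fun N => (sum_range_succ_mul_cpow_neg_eq N).symm

lemma dirichletSeriesByParts_eq_tsum (hc : ∀ N, ‖∑ j ∈ range N, c j‖ ≤ C)
    (hs : 1 < s.re) :
    dirichletSeriesByParts c s = ∑' j, c j * ((j + 1 : ℕ) : ℂ) ^ (-s) := by
  have hcoeff (j : ℕ) : ‖c j‖ ≤ 2 * C := by
    rw [← sum_range_succ_sub_sum c]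
    linarith [norm_sub_le (∑ i ∈ range (j + 1), c i) (∑ i ∈ range j, c i), hc (j + 1), hc j]
  have hsum : Summable (fun j => c j * ((j + 1 : ℕ) : ℂ) ^ (-s)) := by
    refine .of_norm_bounded ((summable_natCast_add_one_rpow_neg hs).mul_left (2 * C)) fun j => ?_
    rw [norm_mul, norm_natCast_cpow_of_pos j.succ_pos, neg_re]
    push_cast
    exact mul_le_mul_of_nonneg_right (hcoeff j) (by positivity)
  exact tendsto_nhds_unique (tendsto_sum_range_mul_cpow_neg hc (by linarith))
    hsum.hasSum.tendsto_sum_nat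

end BoundedPartialSums

lemma norm_sum_range_pow_succ_le {z : ℂ} (hz : ‖z‖ ≤ 1) (h1 : z ≠ 1) (N : ℕ) :
    ‖∑ j ∈ range N, z ^ (j + 1)‖ ≤ 2 / ‖1 - z‖ := by
  simp_rw [pow_succ', ← mul_sum, geom_sum_eq h1 N, norm_mul, norm_div, norm_sub_rev z 1]
  have hpos : 0 < ‖1 - z‖ := norm_pos_iff.mpr (sub_ne_zero.mpr h1.symm)
  have hnum : ‖z ^ N - 1‖ ≤ 2 := (norm_sub_le _ _).trans (by
    rw [norm_pow, norm_one]; linarith [pow_le_one₀ (norm_nonneg z) hz (n := N)])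
  calc ‖z‖ * (‖z ^ N - 1‖ / ‖1 - z‖) ≤ 1 * (2 / ‖1 - z‖) := by gcongr
    _ = 2 / ‖1 - z‖ := one_mul _

open scoped ComplexOrder in
lemma one_sub_mem_slitPlane_of_norm_le_one {z : ℂ} (hz : ‖z‖ ≤ 1) (h1 : z ≠ 1) :
    1 - z ∈ slitPlane := by
  rw [mem_slitPlane_iff_not_le_zero, sub_nonpos]
  intro h
  obtain ⟨hre, him⟩ := Complex.le_def.mp h
  have : z.re ≤ 1 := (re_le_norm z).trans hz
  exact h1 (Complex.ext (by simp at hre ⊢; linarith) (by simpa using him.symm))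

lemma eq_neg_log_one_sub_of_tendsto {z L : ℂ} (hz : ‖z‖ ≤ 1) (h1 : z ≠ 1)
    (h : Tendsto (fun N => ∑ n ∈ range N, z ^ n / n) atTop (𝓝 L)) :
    L = -log (1 - z) := by
  have habel := Complex.tendsto_tsum_powerSeries_nhdsWithin_lt h
  rw [tendsto_map'_iff] at habel
  have hlin : Tendsto (fun x : ℝ => 1 - z * x) (𝓝[<] 1) (𝓝 (1 - z)) :=
    ((continuous_const.sub (continuous_const.mul continuous_ofReal)).tendsto' 1 _
      (by simp)).mono_left nhdsWithin_le_nhds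
  have hlog : Tendsto (fun x : ℝ => -log (1 - z * x)) (𝓝[<] 1) (𝓝 (-log (1 - z))) :=
    ((continuousAt_clog (one_sub_mem_slitPlane_of_norm_le_one hz h1)).tendsto.comp hlin).neg
  have htaylor : (fun x : ℝ => ∑' n : ℕ, z ^ n / n * (x : ℂ) ^ n) =ᶠ[𝓝[<] 1]
      fun x => -log (1 - z * x) := by
    filter_upwards [Ioo_mem_nhdsLT (show (-1 : ℝ) < 1 by norm_num)] with x hx
    have hzx : ‖z * x‖ < 1 := by
      rw [norm_mul, norm_real, Real.norm_eq_abs]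
      nlinarith [abs_lt.mpr ⟨hx.1, hx.2⟩, norm_nonneg z, abs_nonneg x]
    rw [← (hasSum_taylorSeries_neg_log hzx).tsum_eq]
    exact tsum_congr fun n => by rw [mul_pow]; ring
  exact tendsto_nhds_unique habel (hlog.congr' htaylor.symm)

lemma dirichletSeriesByParts_pow_succ_one {z : ℂ} (hz : ‖z‖ ≤ 1) (h1 : z ≠ 1) :
    dirichletSeriesByParts (fun j => z ^ (j + 1)) 1 = log (1 / (1 - z)) := by
  rw [one_div, log_inv _ (slitPlane_arg_ne_pi (one_sub_mem_slitPlane_of_norm_le_one hz h1))]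
  refine eq_neg_log_one_sub_of_tendsto hz h1 ?_
  rw [← tendsto_add_atTop_iff_nat 1]
  refine (tendsto_sum_range_mul_cpow_neg (norm_sum_range_pow_succ_le hz h1) (by simp)).congr
    fun N => ?_
  rw [sum_range_succ']
  simp [cpow_neg_one, div_eq_mul_inv]

theorem stmt_6 (m ℓ : ℕ) (hm : 2 ≤ m) (hl1 : 1 ≤ ℓ) (hlm : ℓ ≤ m - 1) :
    ∃ A : ℂ → ℂ,
      AnalyticOnNhd ℂ A {s : ℂ | 0 < s.re} ∧
      (∀ s : ℂ, 1 < s.re →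
        A s = ∑' j : ℕ,
          (Complex.exp (2 * Real.pi * Complex.I / m)) ^ (ℓ * (j + 1)) *
            ((j + 1 : ℕ) : ℂ) ^ (-s)) ∧
      A 1 = Complex.log (1 / (1 - (Complex.exp (2 * Real.pi * Complex.I / m)) ^ ℓ)) := by
  have hζ := Complex.isPrimitiveRoot_exp m (by omega)
  have hz : ‖cexp (2 * Real.pi * I / m) ^ ℓ‖ ≤ 1 := by
    rw [norm_pow, hζ.norm'_eq_one (by omega), one_pow]
  have h1 : cexp (2 * Real.pi * I / m) ^ ℓ ≠ 1 := hζ.pow_ne_one_of_pos_of_lt (by omega) (by omega)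
  have hc := norm_sum_range_pow_succ_le hz h1
  refine ⟨dirichletSeriesByParts (fun j => (cexp (2 * Real.pi * I / m) ^ ℓ) ^ (j + 1)),
    (differentiableOn_dirichletSeriesByParts hc).analyticOnNhd
      (isOpen_lt continuous_const continuous_re),
    fun s hs => ?_, dirichletSeriesByParts_pow_succ_one hz h1⟩
  simp_rw [pow_mul]
  exact dirichletSeriesByParts_eq_tsum hc hs
end

section
/- Let τ(k) = Σ_{d | k} 1 be the number-of-divisors function and γ Euler's constant. Then, as real α → 0⁺, Σ_{k=1}^{∞} τ(k) e^{−kα} = α^{−1} log(α^{−1}) + γ α^{−1} + O(1). -/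
/-!
By the Lambert series identity `∑ τ(k) x^k = ∑_d x^d / (1 - x^d)` at `x = e^{-α}`, the sum equals
`∑_{d ≥ 1} 1 / (e^{dα} - 1)`. Split `1 / (e^t - 1) = e^{-t} / t + h(t)`. The first part sums to
`-log (1 - e^{-α}) / α = α⁻¹ log α⁻¹ + O(1)`. The remainder `h` is nonnegative, decreasing and
at most `1`, so comparing the sum with the integral gives `∑_d h(dα) = α⁻¹ ∫₀^∞ h + O(1)`.
Finally `∫₀^∞ h = γ`: expanding `h(t) = ∑_{m ≥ 1} (e^{-mt} - ∫_m^{m+1} e^{-ut} du)` and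
integrating termwise turns it into `∑_m (1/m - log ((m+1)/m)) = γ`.
-/

open Real Set MeasureTheory Filter Asymptotics

section IntegralTest

variable {f : ℝ → ℝ} {α C : ℝ}

lemma summable_comp_add_one_mul (hf : AntitoneOn f (Ioi 0)) (hfi : IntegrableOn f (Ioi 0))
    (hf0 : ∀ t ∈ Ioi 0, 0 ≤ f t) (hα : 0 < α) :
    Summable fun n : ℕ => f ((n + 1) * α) := by
  have hanti : AntitoneOn (fun x => f (α * x)) (Ici ((1 : ℕ) : ℝ)) := fun x hx y hy hxy =>
    hf (by simp at hx ⊢; positivity) (by simp at hy ⊢; positivity) (by gcongr)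
  have hint : IntegrableOn (fun x => f (α * x)) (Ioi ((1 : ℕ) : ℝ)) :=
    (integrableOn_Ioi_comp_mul_left_iff f _ hα).2 (hfi.mono_set (Ioi_subset_Ioi (by simp [hα.le])))
  have := hanti.summable_of_integrableOn_Ioi hint fun t ht => hf0 _ (by simp at ht ⊢; positivity)
  simpa [mul_comm] using (summable_nat_add_iff 1).2 this

lemma abs_mul_tsum_sub_integral_le (hf : AntitoneOn f (Ioi 0)) (hfi : IntegrableOn f (Ioi 0))
    (hf0 : ∀ t ∈ Ioi 0, 0 ≤ f t) (hfC : ∀ t ∈ Ioi 0, f t ≤ C) (hα : 0 < α) :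
    |α * ∑' n : ℕ, f ((n + 1) * α) - ∫ t in Ioi 0, f t| ≤ α * C := by
  set ψ : ℝ → ℝ := fun x => f (α * x)
  have hanti : AntitoneOn ψ (Ici ((1 : ℕ) : ℝ)) := fun x hx y hy hxy =>
    hf (by simp at hx ⊢; positivity) (by simp at hy ⊢; positivity) (by gcongr)
  have hint : IntegrableOn ψ (Ioi ((1 : ℕ) : ℝ)) :=
    (integrableOn_Ioi_comp_mul_left_iff f _ hα).2 (hfi.mono_set (Ioi_subset_Ioi (by simp [hα.le])))
  have hψ0 : ∀ t ∈ Ioi ((1 : ℕ) : ℝ), 0 ≤ ψ t := fun t ht => hf0 _ (by simp at ht ⊢; positivity)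
  have hψ : (fun n : ℕ => f ((n + 1) * α)) = fun n => ψ ((n + 1 : ℕ)) := by
    ext n; simp [ψ, mul_comm]
  have hupper := hanti.tsum_comp_add_le_integral 1 hint hψ0
  have hlower := hanti.integral_le_tsum_comp_add 1 (hanti.summable_of_integrableOn_Ioi hint hψ0) hψ0
  have hscale : ∫ x in Ioi ((1 : ℕ) : ℝ), ψ x = α⁻¹ * ∫ t in Ioi α, f t := by
    simpa using integral_comp_mul_left_Ioi f 1 hα
  have hsplit : ∫ t in Ioi 0, f t = (∫ t in Ioc 0 α, f t) + ∫ t in Ioi α, f t := by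
    rw [← setIntegral_union (Ioc_disjoint_Ioi le_rfl) measurableSet_Ioi
      (hfi.mono_set Ioc_subset_Ioi_self) (hfi.mono_set (Ioi_subset_Ioi hα.le)),
      Ioc_union_Ioi_eq_Ioi hα.le]
  have hhead : ∫ t in Ioc 0 α, f t ≤ α * C := by
    calc ∫ t in Ioc 0 α, f t ≤ ∫ _ in Ioc 0 α, C :=
          setIntegral_mono_on (hfi.mono_set Ioc_subset_Ioi_self) (integrableOn_const (by simp))
            measurableSet_Ioc fun t ht => hfC t ht.1
      _ = α * C := by simp [Real.volume_real_Ioc_of_le hα.le]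
  have hhead0 : 0 ≤ ∫ t in Ioc 0 α, f t :=
    setIntegral_nonneg measurableSet_Ioc fun t ht => hf0 t ht.1
  have hshift : ∑' n : ℕ, ψ ((n + 1 : ℕ)) = ψ 1 + ∑' n : ℕ, ψ ((n + 1 + 1 : ℕ)) := by
    have hsum : Summable fun n : ℕ => ψ ((n + 1 : ℕ)) :=
      (summable_nat_add_iff 1).2 (hanti.summable_of_integrableOn_Ioi hint hψ0)
    simpa using hsum.tsum_eq_zero_add
  have hfα : ψ 1 ≤ C := hfC _ (by simpa using hα)
  have hcancel : α * (α⁻¹ * ∫ t in Ioi α, f t) = ∫ t in Ioi α, f t := by field_simp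
  have hlo := mul_le_mul_of_nonneg_left hlower hα.le
  have hup := mul_le_mul_of_nonneg_left hupper hα.le
  rw [hscale, hcancel] at hlo hup
  rw [hψ, abs_le]
  constructor <;> nlinarith

end IntegralTest

lemma tsum_card_divisors_mul_pow {𝕜 : Type*} [NontriviallyNormedField 𝕜] [CompleteSpace 𝕜]
    [NormSMulClass ℤ 𝕜] {r : 𝕜} (hr : ‖r‖ < 1) :
    ∑' k : ℕ, ((k + 1).divisors.card : 𝕜) * r ^ (k + 1)
      = ∑' d : ℕ, r ^ (d + 1) / (1 - r ^ (d + 1)) := by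
  have := tsum_pow_div_one_sub_eq_tsum_sigma hr 0
  simp only [pow_zero, one_mul, ArithmeticFunction.sigma_zero_apply] at this
  rw [tsum_pnat_eq_tsum_succ (f := fun n => r ^ n / (1 - r ^ n)),
    tsum_pnat_eq_tsum_succ (f := fun n => ((n.divisors.card : ℕ) : 𝕜) * r ^ n)] at this
  exact this.symm

lemma tsum_card_divisors_mul_exp_neg {α : ℝ} (hα : 0 < α) :
    ∑' k : ℕ, ((k + 1).divisors.card : ℝ) * exp (-(((k : ℝ) + 1) * α))
      = ∑' d : ℕ, (exp (((d : ℝ) + 1) * α) - 1)⁻¹ := by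
  have hr : ‖exp (-α)‖ < 1 := by
    rw [norm_of_nonneg (exp_pos _).le]; exact exp_lt_one_iff.2 (by linarith)
  have hpow (n : ℕ) : exp (-α) ^ (n + 1) = exp (-(((n : ℝ) + 1) * α)) := by
    rw [← exp_nat_mul]; push_cast; ring_nf
  calc ∑' k : ℕ, ((k + 1).divisors.card : ℝ) * exp (-(((k : ℝ) + 1) * α))
      = ∑' k : ℕ, ((k + 1).divisors.card : ℝ) * exp (-α) ^ (k + 1) :=
        tsum_congr fun k => by rw [hpow]
    _ = ∑' d : ℕ, exp (-α) ^ (d + 1) / (1 - exp (-α) ^ (d + 1)) := tsum_card_divisors_mul_pow hr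
    _ = ∑' d : ℕ, (exp (((d : ℝ) + 1) * α) - 1)⁻¹ := tsum_congr fun d => by
        have h1 : 1 < exp (((d : ℝ) + 1) * α) := one_lt_exp_iff.2 (by positivity)
        rw [hpow, exp_neg]
        field_simp

lemma hasSum_exp_neg_mul_div {α : ℝ} (hα : 0 < α) :
    HasSum (fun d : ℕ => exp (-(((d : ℝ) + 1) * α)) / (((d : ℝ) + 1) * α))
      (-log (1 - exp (-α)) / α) := by
  have hr : |exp (-α)| < 1 := by rw [abs_of_pos (exp_pos _)]; exact exp_lt_one_iff.2 (by linarith)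
  have hterm (d : ℕ) : exp (-α) ^ (d + 1) / ((d : ℝ) + 1) / α
      = exp (-(((d : ℝ) + 1) * α)) / (((d : ℝ) + 1) * α) := by
    rw [← exp_nat_mul, div_div]; push_cast; ring_nf
  simpa only [hterm] using (hasSum_pow_div_log_of_abs_lt_one hr).div_const α

lemma abs_log_one_sub_exp_neg_div_le {α : ℝ} (hα : 0 < α) : |log ((1 - exp (-α)) / α)| ≤ α := by
  have hE : exp (-α) * exp α = 1 := by rw [← exp_add]; simp
  have hle : (1 - exp (-α)) / α ≤ 1 := (div_le_one hα).2 (by linarith [one_sub_le_exp_neg α])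
  have hge : exp (-α) ≤ (1 - exp (-α)) / α := by
    rw [le_div_iff₀ hα]; nlinarith [add_one_le_exp α, exp_pos (-α)]
  have hpos : 0 < (1 - exp (-α)) / α := (exp_pos _).trans_le hge
  rw [abs_of_nonpos (log_nonpos hpos.le hle), neg_le]
  simpa using log_le_log (exp_pos _) hge

lemma integral_Ioi_exp_neg_mul {u : ℝ} (hu : 0 < u) : ∫ t in Ioi 0, exp (-u * t) = u⁻¹ := by
  simpa [neg_div_neg_eq] using integral_exp_mul_Ioi (neg_lt_zero.2 hu) 0

section Frullani

variable {a b : ℝ}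

lemma integrable_exp_neg_mul_prod (ha : 0 < a) :
    Integrable (Function.uncurry fun t u => exp (-u * t))
      ((volume.restrict (Ioi 0)).prod (volume.restrict (Icc a b))) := by
  have hmeas : AEStronglyMeasurable (Function.uncurry fun t u : ℝ => exp (-u * t))
      ((volume.restrict (Ioi 0)).prod (volume.restrict (Icc a b))) :=
    (by fun_prop : Continuous fun p : ℝ × ℝ => exp (-p.2 * p.1)).aestronglyMeasurable
  refine (integrable_prod_iff' hmeas).2 ⟨?_, ?_⟩
  · filter_upwards [ae_restrict_mem measurableSet_Icc] with u hu
    exact exp_neg_integrableOn_Ioi 0 (ha.trans_le hu.1)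
  · refine (continuousOn_inv₀.mono fun u hu => (ha.trans_le hu.1).ne').integrableOn_Icc.congr_fun
      (fun u hu => ?_) measurableSet_Icc
    simp only [Function.uncurry_apply_pair, norm_eq_abs, abs_of_pos (exp_pos _)]
    exact (integral_Ioi_exp_neg_mul (ha.trans_le hu.1)).symm

lemma integral_Icc_exp_neg_mul (hab : a ≤ b) {t : ℝ} (ht : t ≠ 0) :
    ∫ u in Icc a b, exp (-u * t) = (exp (-a * t) - exp (-b * t)) / t := by
  rw [integral_Icc_eq_integral_Ioc, ← intervalIntegral.integral_of_le hab]
  have := intervalIntegral.integral_comp_mul_right (a := a) (b := b) exp (neg_ne_zero.2 ht)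
  simp only [integral_exp, smul_eq_mul] at this
  simp only [neg_mul, ← mul_neg]
  rw [this]
  field_simp
  ring

lemma integrableOn_exp_neg_sub_exp_neg_div (ha : 0 < a) (hab : a ≤ b) :
    IntegrableOn (fun t => (exp (-a * t) - exp (-b * t)) / t) (Ioi 0) := by
  refine (integrable_exp_neg_mul_prod (b := b) ha).integral_prod_left.congr ?_
  filter_upwards [ae_restrict_mem measurableSet_Ioi] with t ht
  exact integral_Icc_exp_neg_mul hab (ne_of_gt ht)

lemma integral_exp_neg_sub_exp_neg_div (ha : 0 < a) (hab : a ≤ b) :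
    ∫ t in Ioi 0, (exp (-a * t) - exp (-b * t)) / t = log (b / a) := by
  calc ∫ t in Ioi 0, (exp (-a * t) - exp (-b * t)) / t
      = ∫ t in Ioi 0, ∫ u in Icc a b, exp (-u * t) := by
        refine setIntegral_congr_fun measurableSet_Ioi fun t ht => ?_
        exact (integral_Icc_exp_neg_mul hab (ne_of_gt ht)).symm
    _ = ∫ u in Icc a b, ∫ t in Ioi 0, exp (-u * t) :=
        integral_integral_swap (integrable_exp_neg_mul_prod ha)
    _ = ∫ u in Icc a b, u⁻¹ :=
        setIntegral_congr_fun measurableSet_Icc fun u hu =>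
          integral_Ioi_exp_neg_mul (ha.trans_le hu.1)
    _ = log (b / a) := by
        rw [integral_Icc_eq_integral_Ioc, ← intervalIntegral.integral_of_le hab,
          integral_inv_of_pos ha (ha.trans_le hab)]

end Frullani

lemma two_sub_mul_exp_le_two_add {t : ℝ} (ht : 0 ≤ t) : (2 - t) * exp t ≤ 2 + t := by
  rcases le_or_gt 2 t with h2 | h2
  · nlinarith [exp_pos t]
  have hx : |t / 2| < 1 := by rw [abs_of_nonneg (by positivity)]; linarith
  -- `t ≤ 2 artanh (t / 2)`: the first term of the series of `artanh`.
  have hlog : t ≤ log (1 + t / 2) - log (1 - t / 2) := by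
    have := le_hasSum (hasSum_log_sub_log_of_abs_lt_one hx) 0 fun k _ => by positivity
    simpa [mul_div_cancel₀] using this
  have hexp : exp t ≤ (1 + t / 2) / (1 - t / 2) := by
    rw [← exp_log (div_pos (by positivity) (by linarith) : 0 < (1 + t / 2) / (1 - t / 2)),
      log_div (by positivity) (by linarith)]
    exact exp_le_exp.2 hlog
  rw [le_div_iff₀ (by linarith)] at hexp
  linarith

-- Removing `e^{-t} / t`, whose values at `t = dα` sum to `-log (1 - e^{-α}) / α`, makes
-- `1 / (e^t - 1)` integrable at `0`.
noncomputable def lambertRemainder (t : ℝ) : ℝ := (exp t - 1)⁻¹ - exp (-t) / t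

lemma lambertRemainder_eq {t : ℝ} (ht : 0 < t) :
    lambertRemainder t = (t - 1 + exp (-t)) / (t * (exp t - 1)) := by
  have : 0 < exp t - 1 := sub_pos.2 (one_lt_exp_iff.2 ht)
  rw [lambertRemainder, exp_neg]
  field_simp
  ring

lemma lambertRemainder_nonneg {t : ℝ} (ht : 0 < t) : 0 ≤ lambertRemainder t := by
  have : 0 < exp t - 1 := sub_pos.2 (one_lt_exp_iff.2 ht)
  rw [lambertRemainder_eq ht]
  exact div_nonneg (by linarith [one_sub_le_exp_neg t]) (by positivity)

lemma lambertRemainder_le_exp_neg {t : ℝ} (ht : 0 < t) : lambertRemainder t ≤ exp (-t) := by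
  have : 0 < exp t - 1 := sub_pos.2 (one_lt_exp_iff.2 ht)
  have hE : exp (-t) * exp t = 1 := by rw [← exp_add]; simp
  rw [lambertRemainder_eq ht, div_le_iff₀ (by positivity)]
  nlinarith [add_one_le_exp t, exp_pos (-t)]

lemma hasDerivAt_lambertRemainder {t : ℝ} (ht : 0 < t) :
    HasDerivAt lambertRemainder (-exp t / (exp t - 1) ^ 2 + exp (-t) * (t + 1) / t ^ 2) t := by
  have h1 := ((hasDerivAt_exp t).sub_const 1).inv (sub_pos.2 (one_lt_exp_iff.2 ht)).ne'
  have h2 := (hasDerivAt_neg t).exp.div (hasDerivAt_id t) ht.ne'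
  exact (h1.sub h2).congr_deriv (by simp only [id]; field_simp; ring)

lemma antitoneOn_lambertRemainder : AntitoneOn lambertRemainder (Ioi 0) := by
  refine antitoneOn_of_hasDerivWithinAt_nonpos (convex_Ioi 0)
    (fun t ht => (hasDerivAt_lambertRemainder ht).continuousAt.continuousWithinAt)
    (fun t ht => (hasDerivAt_lambertRemainder (interior_subset ht)).hasDerivWithinAt)
    fun t ht => ?_
  replace ht : 0 < t := by rwa [interior_Ioi] at ht
  have hE : 1 < exp t := one_lt_exp_iff.2 ht
  have hEt : exp (-t) * exp t = 1 := by rw [← exp_add]; simp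
  -- The Padé bound `1 - e^{-t} ≤ 2t/(2+t)` is what makes the derivative nonpositive.
  have hpade : (exp t - 1) * (2 + t) ≤ 2 * t * exp t := by
    nlinarith [two_sub_mul_exp_le_two_add ht.le]
  have hkey : (t + 1) * (exp t - 1) ^ 2 ≤ t ^ 2 * exp t ^ 2 := by
    nlinarith [mul_self_le_mul_self (by nlinarith) hpade, sq_nonneg t, sq_nonneg (exp t - 1)]
  rw [neg_div, neg_add_le_iff_le_add, add_zero, div_le_div_iff₀ (by positivity) (by nlinarith)]
  calc exp (-t) * (t + 1) * (exp t - 1) ^ 2 = exp (-t) * ((t + 1) * (exp t - 1) ^ 2) := by ring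
    _ ≤ exp (-t) * (t ^ 2 * exp t ^ 2) := by gcongr
    _ = exp t * t ^ 2 := by linear_combination t ^ 2 * exp t * hEt

lemma integrableOn_lambertRemainder : IntegrableOn lambertRemainder (Ioi 0) := by
  refine (exp_neg_integrableOn_Ioi 0 one_pos).mono' ?_ ?_
  · exact (ContinuousOn.aestronglyMeasurable (fun t ht =>
      (hasDerivAt_lambertRemainder ht).continuousAt.continuousWithinAt) measurableSet_Ioi)
  · filter_upwards [ae_restrict_mem measurableSet_Ioi] with t ht
    rw [norm_of_nonneg (lambertRemainder_nonneg ht), neg_one_mul]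
    exact lambertRemainder_le_exp_neg ht

-- `e^{-at} - ∫_a^{a+1} e^{-ut} du` for `a = m + 1`, in closed form.
noncomputable def lambertRemainderTerm (m : ℕ) (t : ℝ) : ℝ :=
  exp (-((m : ℝ) + 1) * t) - (exp (-((m : ℝ) + 1) * t) - exp (-((m : ℝ) + 2) * t)) / t

lemma lambertRemainderTerm_eq {m : ℕ} {t : ℝ} (ht : 0 < t) :
    lambertRemainderTerm m t = exp (-t) ^ (m + 1) * (1 - (1 - exp (-t)) / t) := by
  have h1 : exp (-((m : ℝ) + 1) * t) = exp (-t) ^ (m + 1) := by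
    rw [← exp_nat_mul]; push_cast; ring_nf
  have h2 : exp (-((m : ℝ) + 2) * t) = exp (-t) ^ (m + 1) * exp (-t) := by
    rw [← h1, ← exp_add]; ring_nf
  rw [lambertRemainderTerm, h1, h2]
  field_simp

lemma lambertRemainderTerm_nonneg (m : ℕ) {t : ℝ} (ht : 0 < t) : 0 ≤ lambertRemainderTerm m t := by
  rw [lambertRemainderTerm_eq ht]
  have : (1 - exp (-t)) / t ≤ 1 := (div_le_one ht).2 (by linarith [one_sub_le_exp_neg t])
  exact mul_nonneg (by positivity) (by linarith)

lemma integrableOn_lambertRemainderTerm (m : ℕ) : IntegrableOn (lambertRemainderTerm m) (Ioi 0) :=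
  (exp_neg_integrableOn_Ioi 0 (by positivity)).sub
    (integrableOn_exp_neg_sub_exp_neg_div (by positivity) (by linarith))

lemma integral_lambertRemainderTerm (m : ℕ) :
    ∫ t in Ioi 0, lambertRemainderTerm m t
      = ((m : ℝ) + 1)⁻¹ - log (((m : ℝ) + 2) / ((m : ℝ) + 1)) := by
  unfold lambertRemainderTerm
  rw [integral_sub (exp_neg_integrableOn_Ioi 0 (by positivity))
    (integrableOn_exp_neg_sub_exp_neg_div (by positivity) (by linarith)),
    integral_Ioi_exp_neg_mul (by positivity),
    integral_exp_neg_sub_exp_neg_div (by positivity) (by linarith)]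

lemma hasSum_lambertRemainderTerm {t : ℝ} (ht : 0 < t) :
    HasSum (fun m => lambertRemainderTerm m t) (lambertRemainder t) := by
  have hr : exp (-t) < 1 := exp_lt_one_iff.2 (by linarith)
  have := ((hasSum_geometric_of_lt_one (exp_pos _).le hr).mul_left (exp (-t))).mul_right
    (1 - (1 - exp (-t)) / t)
  have hval : exp (-t) * (1 - exp (-t))⁻¹ * (1 - (1 - exp (-t)) / t) = lambertRemainder t := by
    have hE1 : 0 < exp t - 1 := sub_pos.2 (one_lt_exp_iff.2 ht)
    unfold lambertRemainder
    rw [exp_neg]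
    field_simp
  have hfun : (fun i : ℕ => exp (-t) * exp (-t) ^ i * (1 - (1 - exp (-t)) / t))
      = fun m => lambertRemainderTerm m t :=
    funext fun m => by rw [lambertRemainderTerm_eq ht, pow_succ']
  rwa [hval, hfun] at this

lemma hasSum_inv_sub_log_eulerMascheroniConstant :
    HasSum (fun m : ℕ => ((m : ℝ) + 1)⁻¹ - log (((m : ℝ) + 2) / ((m : ℝ) + 1)))
      eulerMascheroniConstant := by
  rw [hasSum_iff_tendsto_nat_of_nonneg (fun m => integral_lambertRemainderTerm m ▸
    setIntegral_nonneg measurableSet_Ioi fun t ht => lambertRemainderTerm_nonneg m ht)]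
  refine tendsto_eulerMascheroniSeq.congr fun n => ?_
  rw [eulerMascheroniSeq, harmonic, Finset.sum_sub_distrib]
  push_cast
  congr 1
  have htel := Finset.sum_range_sub (fun i : ℕ => log ((i : ℝ) + 1)) n
  simp only [Nat.cast_zero, zero_add, log_one, sub_zero, Nat.cast_add, Nat.cast_one] at htel
  rw [← htel]
  refine Finset.sum_congr rfl fun x _ => ?_
  rw [log_div (by positivity) (by positivity)]
  ring_nf

lemma integral_lambertRemainder : ∫ t in Ioi 0, lambertRemainder t = eulerMascheroniConstant := by
  calc ∫ t in Ioi 0, lambertRemainder t = ∫ t in Ioi 0, ∑' m, lambertRemainderTerm m t :=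
        setIntegral_congr_fun measurableSet_Ioi fun t ht =>
          (hasSum_lambertRemainderTerm ht).tsum_eq.symm
    _ = ∑' m, ∫ t in Ioi 0, lambertRemainderTerm m t := by
        refine (integral_tsum_of_summable_integral_norm integrableOn_lambertRemainderTerm ?_).symm
        refine hasSum_inv_sub_log_eulerMascheroniConstant.summable.congr fun m => ?_
        rw [← integral_lambertRemainderTerm]
        exact setIntegral_congr_fun measurableSet_Ioi fun t ht =>
          (norm_of_nonneg (lambertRemainderTerm_nonneg m ht)).symm
    _ = eulerMascheroniConstant := by
        simp only [integral_lambertRemainderTerm,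
          hasSum_inv_sub_log_eulerMascheroniConstant.tsum_eq]

lemma tsum_inv_exp_mul_sub_one {α : ℝ} (hα : 0 < α) :
    ∑' d : ℕ, (exp (((d : ℝ) + 1) * α) - 1)⁻¹
      = -log (1 - exp (-α)) / α + ∑' d : ℕ, lambertRemainder (((d : ℝ) + 1) * α) := by
  rw [← (hasSum_exp_neg_mul_div hα).tsum_eq,
    ← Summable.tsum_add (hasSum_exp_neg_mul_div hα).summable
      (summable_comp_add_one_mul antitoneOn_lambertRemainder integrableOn_lambertRemainder
        (fun t ht => lambertRemainder_nonneg ht) hα)]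
  exact tsum_congr fun d => by rw [lambertRemainder]; ring

lemma abs_mul_tsum_lambertRemainder_sub_le {α : ℝ} (hα : 0 < α) :
    |α * ∑' d : ℕ, lambertRemainder (((d : ℝ) + 1) * α) - eulerMascheroniConstant| ≤ α := by
  simpa [integral_lambertRemainder] using abs_mul_tsum_sub_integral_le
    antitoneOn_lambertRemainder integrableOn_lambertRemainder
    (fun t ht => lambertRemainder_nonneg ht)
    (fun t ht => (lambertRemainder_le_exp_neg ht).trans (exp_le_one_iff.2 (by simpa using ht.le)))
    hα

theorem stmt_7 :
    (fun α : ℝ =>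
        (∑' k : ℕ, (((k + 1).divisors.card : ℝ)) * Real.exp (-(((k : ℝ) + 1) * α)))
          - (α⁻¹ * Real.log α⁻¹ + Real.eulerMascheroniConstant * α⁻¹))
      =O[nhdsWithin 0 (Set.Ioi 0)] (fun _ : ℝ => (1 : ℝ)) := by
  refine IsBigO.of_bound 2 (eventually_nhdsWithin_of_forall fun α (hα : 0 < α) => ?_)
  rw [tsum_card_divisors_mul_exp_neg hα, tsum_inv_exp_mul_sub_one hα, norm_one, mul_one,
    norm_eq_abs]
  set S := ∑' d : ℕ, lambertRemainder (((d : ℝ) + 1) * α)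
  have hE : 0 < 1 - exp (-α) := sub_pos.2 (exp_lt_one_iff.2 (by linarith))
  calc |-log (1 - exp (-α)) / α + S - (α⁻¹ * log α⁻¹ + eulerMascheroniConstant * α⁻¹)|
      = |α⁻¹ * (-log ((1 - exp (-α)) / α) + (α * S - eulerMascheroniConstant))| := by
        rw [log_div hE.ne' hα.ne', log_inv]
        congr 1
        field_simp
        ring
    _ = α⁻¹ * |-log ((1 - exp (-α)) / α) + (α * S - eulerMascheroniConstant)| := by
        rw [abs_mul, abs_of_pos (inv_pos.2 hα)]
    _ ≤ α⁻¹ * (α + α) := by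
        gcongr
        refine (abs_add_le _ _).trans (add_le_add ?_ (abs_mul_tsum_lambertRemainder_sub_le hα))
        rw [abs_neg]
        exact abs_log_one_sub_exp_neg_div_le hα
    _ = 2 := by field_simp; ring
end

section
/- Fix integers m ≥ 1 and 1 ≤ h ≤ m−1, and let ω = e^{2πi/m}. Then γ_{m,h} = (1/m) Σ_{ℓ=1}^{m−1} ω^{−hℓ} log(1/(1 − ω^ℓ)) equals the real number (1/m)[ (π/2) cot(hπ/m) + log 2 − 2 Σ_{0 < k < m/2} cos(2hkπ/m) · log sin(kπ/m) ]. -/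
/-!
For `θ ∈ (0, 2π)`, `1 - e^{iθ} = 2 sin(θ/2) e^{i(θ - π)/2}` with `(θ - π)/2 ∈ (-π/2, π/2)`,
so the principal logarithm of `1/(1 - ω^ℓ)` is `-log 2 - log sin(πℓ/m) - iπ(ℓ/m - 1/2)`.
Multiply by `z^ℓ`, where `z = ω^{-h} ≠ 1`, and sum over `0 < ℓ < m`. The constant contributes
`log 2` because `∑ z^ℓ = -1`; the sawtooth `ℓ/m - 1/2` has discrete Fourier coefficient
`(i/2) cot(πh/m)`; and `log sin(πℓ/m)` is invariant under `ℓ ↦ m - ℓ`, so pairing `ℓ` with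
`m - ℓ` turns its coefficient into the cosine sum over `0 < k < m/2` (the middle term
`ℓ = m/2` vanishes since `sin(π/2) = 1`).
-/

open Complex Finset
open scoped Real

lemma Complex.log_one_div_one_sub_exp_mul_I {θ : ℝ} (h0 : 0 < θ) (h2π : θ < 2 * π) :
    log (1 / (1 - exp (θ * I)))
      = -(Real.log 2 : ℂ) - Real.log (Real.sin (θ / 2)) - (θ / 2 - π / 2) * I := by
  have hs : 0 < Real.sin (θ / 2) := Real.sin_pos_of_pos_of_lt_pi (by linarith) (by linarith)
  set u := exp (θ / 2 * I)
  have hu : u ≠ 0 := exp_ne_zero _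
  have hsq : exp (θ * I) = u ^ 2 := by rw [← exp_nat_mul]; congr 1; push_cast; ring
  have hinv : exp (-(θ / 2) * I) = u⁻¹ := by rw [← exp_neg]; congr 1; ring
  have hrot : exp ((π / 2 - θ / 2) * I) = I * u⁻¹ := by
    rw [sub_mul, exp_sub, exp_pi_div_two_mul_I, div_eq_mul_inv]
  have hsin : 2 * sin (θ / 2 : ℂ) = (u⁻¹ - u) * I := by rw [two_sin, hinv]
  have hsin0 : 2 * sin (θ / 2 : ℂ) ≠ 0 := by
    exact_mod_cast (by positivity : 2 * Real.sin (θ / 2) ≠ 0)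
  have hne : u⁻¹ - u ≠ 0 := fun h ↦ hsin0 (by rw [hsin, h, zero_mul])
  have hne' : 1 - u ^ 2 ≠ 0 := by
    rw [show 1 - u ^ 2 = u * (u⁻¹ - u) by field_simp]; exact mul_ne_zero hu hne
  have hpolar : 1 / (1 - exp (θ * I))
      = ((2 * Real.sin (θ / 2))⁻¹ : ℝ) * exp ((π / 2 - θ / 2 : ℝ) * I) := by
    push_cast
    rw [hrot, hsin, hsq]
    field_simp
  rw [hpolar, log_ofReal_mul (by positivity) (exp_ne_zero _), log_exp, Real.log_inv,
    Real.log_mul two_ne_zero hs.ne']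
  · push_cast; ring
  · simp; linarith
  · simp; linarith

lemma Complex.cot_neg (x : ℂ) : cot (-x) = -cot x := by
  simp [Complex.cot, div_neg]

lemma sub_one_mul_sum_range_natCast_mul_pow {R : Type*} [CommRing R] (z : R) (n : ℕ) :
    (z - 1) * ∑ i ∈ range n, (i : R) * z ^ i = n * z ^ n - z * ∑ i ∈ range n, z ^ i := by
  induction n with
  | zero => simp
  | succ n ih =>
    rw [sum_range_succ, sum_range_succ, mul_add, ih]
    push_cast
    ring

section RootOfUnity

variable {K : Type*} [Field K] {z : K} {m : ℕ}

lemma sum_range_pow_eq_zero_of_pow_eq_one (hz : z ≠ 1) (hzm : z ^ m = 1) :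
    ∑ i ∈ range m, z ^ i = 0 := by
  rw [geom_sum_eq hz, hzm, sub_self, zero_div]

lemma sum_Ioo_pow_eq_neg_one (hz : z ≠ 1) (hzm : z ^ m = 1) (hm : 0 < m) :
    ∑ i ∈ Ioo 0 m, z ^ i = -1 := by
  have h := sum_range_eq_add_Ico (fun i => z ^ i) hm
  rw [sum_range_pow_eq_zero_of_pow_eq_one hz hzm] at h
  rw [← Ico_add_one_left_eq_Ioo, zero_add]
  linear_combination -h

lemma sum_Ioo_natCast_mul_pow (hz : z ≠ 1) (hzm : z ^ m = 1) :
    ∑ i ∈ Ioo 0 m, (i : K) * z ^ i = m / (z - 1) := by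
  rcases Nat.eq_zero_or_pos m with rfl | hm
  · simp
  have h := sub_one_mul_sum_range_natCast_mul_pow z m
  rw [hzm, sum_range_pow_eq_zero_of_pow_eq_one hz hzm, sum_range_eq_add_Ico _ hm] at h
  rw [← Ico_add_one_left_eq_Ioo, zero_add, eq_div_iff (sub_ne_zero.2 hz)]
  linear_combination h

end RootOfUnity

lemma sum_Ioo_sawtooth_mul_exp_pow {x : ℂ} {m : ℕ} (hm : 0 < m)
    (hz : exp (-2 * I * x) ≠ 1) (hzm : exp (-2 * I * x) ^ m = 1) :
    ∑ ℓ ∈ Ioo 0 m, ((ℓ : ℂ) / m - 1 / 2) * exp (-2 * I * x) ^ ℓ = I * cot x / 2 := by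
  have hcot := cot_eq_exp_ratio (-x)
  rw [Complex.cot_neg, show 2 * I * -x = -2 * I * x by ring] at hcot
  have hm' : (m : ℂ) ≠ 0 := by exact_mod_cast hm.ne'
  simp_rw [sub_mul, sum_sub_distrib, div_mul_eq_mul_div, ← sum_div, ← mul_sum,
    sum_Ioo_natCast_mul_pow hz hzm, sum_Ioo_pow_eq_neg_one hz hzm hm]
  rw [← neg_neg (cot x), hcot]
  set w := exp (-2 * I * x)
  have h1 : 1 - w ≠ 0 := sub_ne_zero.2 hz.symm
  have h2 : w - 1 ≠ 0 := sub_ne_zero.2 hz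
  field_simp
  ring

lemma sum_Ioo_eq_sum_filter_add_reflect {M : Type*} [AddCommMonoid M] (m : ℕ) (g : ℕ → M)
    (hmid : ∀ k, 2 * k = m → g k = 0) :
    ∑ k ∈ Ioo 0 m, g k = ∑ k ∈ (Ioo 0 m).filter (fun k => 2 * k < m), (g k + g (m - k)) := by
  rw [sum_add_distrib, ← sum_filter_add_sum_filter_not (Ioo 0 m) (fun k => 2 * k < m)]
  congr 1
  rw [← sum_filter_add_sum_filter_not _ (fun k => 2 * k = m),
    sum_eq_zero fun k hk => hmid k (mem_filter.1 hk).2, zero_add]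
  refine sum_nbij' (fun k => m - k) (fun k => m - k) ?_ ?_ ?_ ?_ ?_ <;>
    intro k hk <;> simp only [mem_filter, mem_Ioo] at hk ⊢
  · omega
  · omega
  · omega
  · omega
  · rw [Nat.sub_sub_self (by omega)]

lemma sum_Ioo_exp_pow_mul_eq_sum_cos_of_symm (m h : ℕ) (f : ℕ → ℝ)
    (hsymm : ∀ k < m, f (m - k) = f k) (hmid : ∀ k, 2 * k = m → f k = 0) :
    ∑ ℓ ∈ Ioo 0 m, exp (-2 * I * (h * π / m)) ^ ℓ * f ℓ
      = ((2 * ∑ k ∈ (Ioo 0 m).filter (fun k => 2 * k < m),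
          Real.cos (2 * h * k * π / m) * f k : ℝ) : ℂ) := by
  rw [sum_Ioo_eq_sum_filter_add_reflect m _ fun k hk => by rw [hmid k hk, ofReal_zero, mul_zero],
    mul_sum]
  push_cast
  refine sum_congr rfl fun k hk => ?_
  have hk : 0 < k ∧ k < m := mem_Ioo.1 (mem_filter.1 hk).1
  have hm : (m : ℂ) ≠ 0 := by exact_mod_cast (hk.1.trans hk.2).ne'
  have hneg : exp (-2 * I * (h * π / m)) ^ k = exp (-(2 * h * k * π / m) * I) := by
    rw [← exp_nat_mul]; congr 1; ring
  have hreflect : exp (-2 * I * (h * π / m)) ^ (m - k) = exp ((2 * h * k * π / m) * I) := by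
    rw [← exp_nat_mul, Nat.cast_sub hk.2.le,
      show ((m : ℂ) - k) * (-2 * I * (h * π / m)) = 2 * h * k * π / m * I - h * (2 * π * I) by
        field_simp; ring,
      exp_sub, exp_nat_mul_two_pi_mul_I, div_one]
  rw [hsymm k hk.2, hneg, hreflect, ← mul_assoc, two_cos, add_comm, add_mul]

lemma sum_Ioo_exp_pow_mul_log_sin_eq_sum_cos (m h : ℕ) :
    ∑ ℓ ∈ Ioo 0 m, exp (-2 * I * (h * π / m)) ^ ℓ * Real.log (Real.sin (ℓ * π / m))
      = ((2 * ∑ k ∈ (Ioo 0 m).filter (fun k => 2 * k < m),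
          Real.cos (2 * h * k * π / m) * Real.log (Real.sin (k * π / m)) : ℝ) : ℂ) := by
  refine sum_Ioo_exp_pow_mul_eq_sum_cos_of_symm m h (fun ℓ => Real.log (Real.sin (ℓ * π / m))) ?_ ?_
  · intro k hk
    have hm : (m : ℝ) ≠ 0 := by exact_mod_cast (Nat.zero_lt_of_lt hk).ne'
    rw [Nat.cast_sub hk.le, show ((m : ℝ) - k) * π / m = π - k * π / m by field_simp,
      Real.sin_pi_sub]
  · rintro k rfl
    rcases Nat.eq_zero_or_pos k with rfl | hk
    · simp
    have hk : (k : ℝ) ≠ 0 := by positivity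
    rw [show (k : ℝ) * π / ((2 * k : ℕ) : ℝ) = π / 2 by push_cast; field_simp,
      Real.sin_pi_div_two, Real.log_one]

lemma exp_zpow_mul_log_one_div_one_sub_exp_pow {m h ℓ : ℕ} (hℓ : ℓ ∈ Ioo 0 m) :
    exp (2 * π * I / m) ^ (-((h : ℤ) * ℓ)) * log (1 / (1 - exp (2 * π * I / m) ^ ℓ))
      = -Real.log 2 * exp (-2 * I * (h * π / m)) ^ ℓ
        - exp (-2 * I * (h * π / m)) ^ ℓ * Real.log (Real.sin (ℓ * π / m))
        - π * I * ((ℓ / m - 1 / 2) * exp (-2 * I * (h * π / m)) ^ ℓ) := by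
  obtain ⟨hℓ0, hℓm⟩ := mem_Ioo.1 hℓ
  have hm : (0 : ℝ) < m := by exact_mod_cast hℓ0.trans hℓm
  have hℓ0' : (0 : ℝ) < ℓ := by exact_mod_cast hℓ0
  have hθ : 2 * π * ℓ / m < 2 * π := by
    rw [div_lt_iff₀ hm]
    nlinarith [Real.pi_pos, (by exact_mod_cast hℓm : (ℓ : ℝ) < m)]
  have hzpow : exp (2 * π * I / m) ^ (-((h : ℤ) * ℓ)) = exp (-2 * I * (h * π / m)) ^ ℓ := by
    rw [← exp_int_mul, ← exp_nat_mul]; congr 1; push_cast; ring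
  have hζpow : exp (2 * π * I / m) ^ ℓ = exp ((2 * π * ℓ / m : ℝ) * I) := by
    rw [← exp_nat_mul]; congr 1; push_cast; ring
  rw [hzpow, hζpow, log_one_div_one_sub_exp_mul_I (by positivity) hθ]
  have hm' : (m : ℂ) ≠ 0 := by exact_mod_cast hm.ne'
  push_cast
  field_simp

theorem stmt_18_general (m h : ℕ) (hh1 : 1 ≤ h) (hhm : h ≤ m - 1) :
    (1 / (m : ℂ)) * ∑ ℓ ∈ Finset.Icc 1 (m - 1),
        (Complex.exp (2 * Real.pi * Complex.I / m)) ^ (-((h : ℤ) * ℓ)) *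
          Complex.log (1 / (1 - (Complex.exp (2 * Real.pi * Complex.I / m)) ^ (ℓ : ℕ)))
      = (((1 / (m : ℝ)) *
          ((Real.pi / 2) * Real.cot ((h : ℝ) * Real.pi / m) + Real.log 2
            - 2 * ∑ k ∈ (Finset.Ioo 0 m).filter (fun k => 2 * k < m),
                Real.cos (2 * (h : ℝ) * k * Real.pi / m) *
                  Real.log (Real.sin ((k : ℝ) * Real.pi / m)) : ℝ)) : ℂ) := by
  have hm : 0 < m := by omega
  have hζ := isPrimitiveRoot_exp m hm.ne'
  have hz : exp (-2 * I * (h * π / m)) = (exp (2 * π * I / m) ^ h)⁻¹ := by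
    rw [← exp_nat_mul, ← exp_neg]; congr 1; ring
  have hz1 : exp (-2 * I * (h * π / m)) ≠ 1 :=
    hz ▸ inv_ne_one.2 (hζ.pow_ne_one_of_pos_of_lt (by omega) (by omega))
  have hzm : exp (-2 * I * (h * π / m)) ^ m = 1 := by
    rw [hz, inv_pow, ← pow_mul, mul_comm h m, pow_mul, hζ.pow_eq_one, one_pow, inv_one]
  rw [show Icc 1 (m - 1) = Ioo 0 m by ext; simp; omega,
    sum_congr rfl fun ℓ hℓ => exp_zpow_mul_log_one_div_one_sub_exp_pow hℓ, sum_sub_distrib,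
    sum_sub_distrib, ← mul_sum, ← mul_sum, sum_Ioo_pow_eq_neg_one hz1 hzm hm,
    sum_Ioo_sawtooth_mul_exp_pow hm hz1 hzm, sum_Ioo_exp_pow_mul_log_sin_eq_sum_cos]
  push_cast
  linear_combination (-π / (2 * m) * cot (h * π / m)) * I_sq

theorem stmt_18 (m h : ℕ) (hm : 1 ≤ m) (hh1 : 1 ≤ h) (hhm : h ≤ m - 1) :
    (1 / (m : ℂ)) * ∑ ℓ ∈ Finset.Icc 1 (m - 1),
        (Complex.exp (2 * Real.pi * Complex.I / m)) ^ (-((h : ℤ) * ℓ)) *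
          Complex.log (1 / (1 - (Complex.exp (2 * Real.pi * Complex.I / m)) ^ (ℓ : ℕ)))
      = (((1 / (m : ℝ)) *
          ((Real.pi / 2) * Real.cot ((h : ℝ) * Real.pi / m) + Real.log 2
            - 2 * ∑ k ∈ (Finset.Ioo 0 m).filter (fun k => 2 * k < m),
                Real.cos (2 * (h : ℝ) * k * Real.pi / m) *
                  Real.log (Real.sin ((k : ℝ) * Real.pi / m)) : ℝ)) : ℂ) :=
  stmt_18_general m h hh1 hhm
end
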